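/- Let Ω > 0. Let H be the complex Hilbert space ℓ² over the index set {ℓ ∈ ℕ : ℓ ≥ 1}, with standard orthonormal basis (e_ℓ)_{ℓ ≥ 1}, and adopt the convention e₀ := 0. Set λ_ℓ = ℓ(ℓ+1) and a_ℓ = √( (ℓ+1)(ℓ−1) / ((2ℓ+1)(2ℓ−1)) ) for ℓ ≥ 1. Let T : H → H be a continuous linear map satisfying, for every ℓ ≥ 1, T e_ℓ = (1 − 6/λ_ℓ)·(a_ℓ·e_{ℓ−1} + a_{ℓ+1}·e_{ℓ+1}) − (Ω/λ_ℓ)·e_ℓ. Then the ℂ-spectrum of T is contained in the real axis: every λ in the spectrum of T satisfies Im λ = 0. -/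

import Mathlib

open Complex

/-- The standard orthonormal basis vectors of `ℓ²({ℓ ∈ ℕ : ℓ ≥ 1}; ℂ)`, with the
convention `e₀ := 0`. -/
noncomputable def e (ℓ : ℕ) : lp (fun _ : {ℓ : ℕ // 1 ≤ ℓ} => ℂ) 2 :=
  if h : 1 ≤ ℓ then lp.single 2 ⟨ℓ, h⟩ 1 else 0

/-- The eigenvalue `λ_ℓ = ℓ(ℓ+1)` of `−Δ` on the sphere. -/
noncomputable def lamCoef (ℓ : ℕ) : ℝ := (ℓ : ℝ) * ((ℓ : ℝ) + 1)

/-- The coefficient `a_ℓ = √((ℓ+1)(ℓ−1)/((2ℓ+1)(2ℓ−1)))` for `ℓ ≥ 1`. -/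
noncomputable def aCoef (ℓ : ℕ) : ℝ :=
  Real.sqrt ((((ℓ : ℝ) + 1) * ((ℓ : ℝ) - 1)) / ((2 * (ℓ : ℝ) + 1) * (2 * (ℓ : ℝ) - 1)))

/-!
In the basis `(e ℓ)` the operator `T` has the real tridiagonal matrix `tMatrix Omega`, and `e 2`
is an eigenvector (`λ₂ = 6` kills the off-diagonal part of `T (e 2)`). So `T` is block upper
triangular for `ℂ e₂ ⊕ e₂ᗮ`, and its spectrum lies in that of the pinching `P T P + Q T Q`.
Away from the pair `(2, ·)` the matrix is symmetric for the positive weights `w_ℓ = 1 - 6 / λ_ℓ`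
(`ℓ ≥ 3`, with `w_1 = 1`): `w_j t_jk = w_k t_kj`. Conjugating the pinching by `diag √w` therefore
gives a self-adjoint operator, whose spectrum is real.
-/

section Pinching

variable {R A : Type*} [CommRing R] [Ring A] [Algebra R A]

def pinch (p a : A) : A :=
  p * a * p + (1 - p) * a * (1 - p)

theorem IsUnit.sub_mul_mul_one_sub {p b d : A} (hp : IsIdempotentElem p) (hd : IsUnit d)
    (hpd : Commute p d) : IsUnit (d - p * b * (1 - p)) := by
  obtain ⟨u, rfl⟩ := hd
  have hqup : (1 - p) * ↑u⁻¹ * p = 0 := by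
    rw [mul_assoc, ← (hpd.units_inv_right).eq, ← mul_assoc, hp.one_sub_mul_self, zero_mul]
  have hnil : IsNilpotent (↑u⁻¹ * (p * b * (1 - p))) := ⟨2, by
    calc (↑u⁻¹ * (p * b * (1 - p))) ^ 2
        = ↑u⁻¹ * p * b * ((1 - p) * ↑u⁻¹ * p) * b * (1 - p) := by noncomm_ring
      _ = 0 := by rw [hqup]; simp⟩
  have hfac : ↑u - p * b * (1 - p) = ↑u * (1 - ↑u⁻¹ * (p * b * (1 - p))) := by
    rw [mul_sub (u : A), mul_one, Units.mul_inv_cancel_left]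
  rw [hfac]
  exact u.isUnit.mul hnil.isUnit_one_sub

theorem IsIdempotentElem.commute_pinch {p : A} (hp : IsIdempotentElem p) (a : A) :
    Commute p (pinch p a) := by
  unfold pinch
  have hleft : p * (p * a * p + (1 - p) * a * (1 - p)) = p * a * p := by
    calc _ = (p * p) * a * p + (p * (1 - p)) * a * (1 - p) := by noncomm_ring
      _ = p * a * p := by rw [hp.eq, hp.mul_one_sub_self]; simp
  have hright : (p * a * p + (1 - p) * a * (1 - p)) * p = p * a * p := by
    calc _ = p * a * (p * p) + (1 - p) * a * ((1 - p) * p) := by noncomm_ring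
      _ = p * a * p := by rw [hp.eq, hp.one_sub_mul_self]; simp
  exact hleft.trans hright.symm

theorem spectrum.subset_pinch {p a : A} (hp : IsIdempotentElem p) (ha : (1 - p) * a * p = 0) :
    spectrum R a ⊆ spectrum R (pinch p a) := by
  intro μ hμ
  by_contra hb
  rw [spectrum.mem_iff] at hμ
  rw [spectrum.notMem_iff] at hb
  have hsplit : algebraMap R A μ - a = (algebraMap R A μ - pinch p a) - p * a * (1 - p) := by
    calc algebraMap R A μ - a
        = (algebraMap R A μ - pinch p a) - p * a * (1 - p) - (1 - p) * a * p := by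
          unfold pinch; noncomm_ring
      _ = _ := by rw [ha, sub_zero]
  exact hμ (hsplit ▸ hb.sub_mul_mul_one_sub hp
    ((Algebra.commute_algebraMap_right μ p).sub_right (hp.commute_pinch a)))

end Pinching

open scoped ENNReal ComplexConjugate lp

local notation "ℓ^∞(" ι ", " 𝕜 ")" => lp (fun _ : ι => 𝕜) ∞

namespace lp

variable {ι 𝕜 : Type*} [RCLike 𝕜]

theorem memℓp_infty_mul {p : ℝ≥0∞} (c : ℓ^∞(ι, 𝕜)) (x : lp (fun _ : ι => 𝕜) p) :
    Memℓp (⇑c * ⇑x) p :=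
  ((lp.memℓp x).norm.const_mul ‖c‖).mono fun i => by
    rw [Pi.mul_apply, norm_mul]
    gcongr
    exact norm_apply_le_norm ENNReal.top_ne_zero c i

noncomputable def diagonal : ℓ^∞(ι, 𝕜) →+* (ℓ²(ι, 𝕜) →L[𝕜] ℓ²(ι, 𝕜)) where
  toFun c := LinearMap.mkContinuous
    { toFun x := ⟨⇑c * ⇑x, memℓp_infty_mul c x⟩
      map_add' x y := lp.ext (mul_add (⇑c) x y)
      map_smul' a x := lp.ext (mul_smul_comm a (⇑c) x) }
    ‖c‖ fun x => by
      refine (lp.norm_mono two_ne_zero (y := (‖c‖ : 𝕜) • x) fun i => ?_).trans ?_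
      · simp only [LinearMap.coe_mk, AddHom.coe_mk, lp.coeFn_smul, Pi.smul_apply, Pi.mul_apply,
          norm_mul, smul_eq_mul, RCLike.norm_ofReal, abs_norm]
        gcongr
        exact norm_apply_le_norm ENNReal.top_ne_zero c i
      · rw [norm_smul, RCLike.norm_ofReal, abs_norm]
  map_one' := by ext x i; exact one_mul (x i)
  map_mul' c d := by ext x i; exact mul_assoc (c i) (d i) (x i)
  map_zero' := by ext x i; exact zero_mul (x i)
  map_add' c d := by ext x i; exact add_mul (c i) (d i) (x i)

theorem diagonal_apply (c : ℓ^∞(ι, 𝕜)) (x : ℓ²(ι, 𝕜)) (i : ι) :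
    diagonal c x i = c i * x i :=
  rfl

variable [DecidableEq ι]

theorem inner_single_one_left (i : ι) (x : ℓ²(ι, 𝕜)) :
    inner 𝕜 (lp.single 2 i (1 : 𝕜)) x = x i := by
  simp [lp.inner_single_left]

theorem single_eq_smul_single_one (i : ι) (a : 𝕜) :
    lp.single (E := fun _ : ι => 𝕜) 2 i a = a • lp.single 2 i 1 := by
  rw [← lp.single_smul, smul_eq_mul, mul_one]

theorem ext_single_one_apply {X Y : ℓ²(ι, 𝕜) →L[𝕜] ℓ²(ι, 𝕜)}
    (h : ∀ i j, X (lp.single 2 j 1) i = Y (lp.single 2 j 1) i) : X = Y :=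
  lp.ext_continuousLinearMap ENNReal.ofNat_ne_top fun j => ContinuousLinearMap.ext fun a =>
    lp.ext <| funext fun i => by
      simp [single_eq_smul_single_one j a, h i j]

theorem isSelfAdjoint_of_single_one_apply {X : ℓ²(ι, 𝕜) →L[𝕜] ℓ²(ι, 𝕜)}
    (h : ∀ i j, X (lp.single 2 j 1) i = conj (X (lp.single 2 i 1) j)) : IsSelfAdjoint X := by
  refine ContinuousLinearMap.isSelfAdjoint_iff'.2 (ext_single_one_apply fun i j => ?_)
  rw [← inner_single_one_left, ContinuousLinearMap.adjoint_inner_right, lp.inner_single_right, h]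
  simp

theorem diagonal_single (c : ℓ^∞(ι, 𝕜)) (j : ι) (a : 𝕜) :
    diagonal c (lp.single 2 j a) = lp.single 2 j (c j * a) := by
  ext i
  rw [diagonal_apply, lp.single_apply, lp.single_apply]
  rcases eq_or_ne i j with rfl | hij
  · simp
  · simp [hij]

theorem diagonal_mul_mul_diagonal_single_one_apply (u v : ℓ^∞(ι, 𝕜))
    (X : ℓ²(ι, 𝕜) →L[𝕜] ℓ²(ι, 𝕜)) (i j : ι) :
    (diagonal u * X * diagonal v) (lp.single 2 j 1) i = u i * v j * X (lp.single 2 j 1) i := by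
  rw [mul_apply_eq_comp, mul_apply_eq_comp, diagonal_single, mul_one,
    single_eq_smul_single_one, map_smul, diagonal_apply, lp.coeFn_smul, Pi.smul_apply,
    smul_eq_mul]
  ring

end lp

theorem e_coe (i : {ℓ : ℕ // 1 ≤ ℓ}) : e i = lp.single 2 i 1 :=
  dif_pos i.2

theorem e_apply (k : ℕ) (i : {ℓ : ℕ // 1 ≤ ℓ}) : e k i = if (i : ℕ) = k then 1 else 0 := by
  unfold e
  split_ifs with hk hik hik
  · rw [lp.single_apply, Pi.single_apply, if_pos (Subtype.ext hik)]
  · rw [lp.single_apply, Pi.single_apply, if_neg fun h => hik (congrArg Subtype.val h)]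
  · exact absurd (hik ▸ i.2) hk
  · rfl

noncomputable def tMatrix (Omega : ℝ) (i k : ℕ) : ℝ :=
  (1 - 6 / lamCoef k) * (aCoef k * (if i + 1 = k then 1 else 0)
    + aCoef (k + 1) * (if i = k + 1 then 1 else 0)) - Omega / lamCoef k * (if i = k then 1 else 0)

theorem tMatrix_two {Omega : ℝ} {i : ℕ} (hi : i ≠ 2) : tMatrix Omega i 2 = 0 := by
  norm_num [tMatrix, lamCoef, hi]

theorem tMatrix_eq_zero {Omega : ℝ} {i k : ℕ} (h₁ : i + 1 ≠ k) (h₂ : i ≠ k + 1) (h₃ : i ≠ k) :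
    tMatrix Omega i k = 0 := by
  simp [tMatrix, h₁, h₂, h₃]

noncomputable def weight (k : ℕ) : ℝ :=
  if 3 ≤ k then 1 - 6 / lamCoef k else 1

theorem weight_mul_tMatrix_succ (Omega : ℝ) {k : ℕ} (hk : k = 0 ∨ 3 ≤ k) :
    weight k * tMatrix Omega k (k + 1) = weight (k + 1) * tMatrix Omega (k + 1) k := by
  rcases hk with rfl | hk
  · simp [tMatrix, aCoef]
  · simp [weight, tMatrix, hk, show 3 ≤ k + 1 by omega, show k ≠ k + 1 + 1 by omega,
      show k + 1 + 1 ≠ k by omega]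
    ring

theorem weight_mul_tMatrix_comm (Omega : ℝ) {i k : ℕ} (hik : i = 2 ↔ k = 2) :
    weight i * tMatrix Omega i k = weight k * tMatrix Omega k i := by
  by_cases h₁ : i + 1 = k
  · subst h₁
    exact weight_mul_tMatrix_succ Omega (by omega)
  by_cases h₂ : k + 1 = i
  · subst h₂
    exact (weight_mul_tMatrix_succ Omega (by omega)).symm
  by_cases h₃ : i = k
  · rw [h₃]
  rw [tMatrix_eq_zero h₁ (by omega) h₃, tMatrix_eq_zero h₂ (by omega) (Ne.symm h₃), mul_zero,
    mul_zero]

theorem half_le_weight (k : ℕ) : 1 / 2 ≤ weight k := by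
  unfold weight
  split_ifs with hk
  · have hk' : (3 : ℝ) ≤ k := by exact_mod_cast hk
    have hlam : 12 ≤ lamCoef k := by unfold lamCoef; nlinarith
    have : 6 / lamCoef k ≤ 1 / 2 := by rw [div_le_iff₀ (by linarith)]; linarith
    linarith
  · norm_num

theorem weight_le_one (k : ℕ) : weight k ≤ 1 := by
  unfold weight
  split_ifs with hk
  · have hlam : 0 < lamCoef k := by unfold lamCoef; positivity
    linarith [div_pos (by norm_num : (0 : ℝ) < 6) hlam]
  · exact le_rfl

theorem weight_pos (k : ℕ) : 0 < weight k :=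
  one_half_pos.trans_le (half_le_weight k)

theorem Real.sqrt_mul_inv_sqrt_mul_eq_of_mul_eq {a b x y : ℝ} (ha : 0 < a) (hb : 0 < b)
    (h : a * x = b * y) :
    √a * (√b)⁻¹ * x = √b * (√a)⁻¹ * y := by
  have ha' := Real.sqrt_pos.2 ha
  have hb' := Real.sqrt_pos.2 hb
  field_simp
  rw [Real.sq_sqrt ha.le, Real.sq_sqrt hb.le, h]

noncomputable def sqrtWeight : (ℓ^∞({ℓ : ℕ // 1 ≤ ℓ}, ℂ))ˣ where
  val := ⟨fun i => ((√(weight i) : ℝ) : ℂ), memℓp_infty ⟨1, by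
    rintro _ ⟨i, rfl⟩
    dsimp only
    rw [Complex.norm_real, Real.norm_of_nonneg (Real.sqrt_nonneg _)]
    exact Real.sqrt_le_one.2 (weight_le_one i)⟩⟩
  inv := ⟨fun i => (((√(weight i))⁻¹ : ℝ) : ℂ), memℓp_infty ⟨2, by
    rintro _ ⟨i, rfl⟩
    dsimp only
    have : 1 / 2 ≤ √(weight i) := Real.le_sqrt_of_sq_le (by linarith [half_le_weight i])
    rw [Complex.norm_real, Real.norm_of_nonneg (by positivity)]
    exact inv_le_of_inv_le₀ two_pos (by linarith)⟩⟩
  val_inv := lp.ext <| funext fun i => by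
    show ((√(weight i) : ℝ) : ℂ) * (((√(weight i))⁻¹ : ℝ) : ℂ) = 1
    exact_mod_cast mul_inv_cancel₀ (Real.sqrt_pos.2 (weight_pos i)).ne'
  inv_val := lp.ext <| funext fun i => by
    show (((√(weight i))⁻¹ : ℝ) : ℂ) * ((√(weight i) : ℝ) : ℂ) = 1
    exact_mod_cast inv_mul_cancel₀ (Real.sqrt_pos.2 (weight_pos i)).ne'

theorem sqrtWeight_apply (i : {ℓ : ℕ // 1 ≤ ℓ}) :
    (sqrtWeight : ℓ^∞({ℓ : ℕ // 1 ≤ ℓ}, ℂ)) i = ((√(weight i) : ℝ) : ℂ) :=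
  rfl

theorem sqrtWeight_inv_apply (i : {ℓ : ℕ // 1 ≤ ℓ}) :
    (↑sqrtWeight⁻¹ : ℓ^∞({ℓ : ℕ // 1 ≤ ℓ}, ℂ)) i = (((√(weight i))⁻¹ : ℝ) : ℂ) :=
  rfl

noncomputable def deltaTwo : ℓ^∞({ℓ : ℕ // 1 ≤ ℓ}, ℂ) :=
  lp.single ∞ ⟨2, one_le_two⟩ 1

theorem deltaTwo_apply (i : {ℓ : ℕ // 1 ≤ ℓ}) : deltaTwo i = if (i : ℕ) = 2 then 1 else 0 := by
  rw [deltaTwo, lp.single_apply, Pi.single_apply]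
  simp only [Subtype.ext_iff]

theorem isIdempotentElem_deltaTwo : IsIdempotentElem deltaTwo :=
  lp.ext <| funext fun i => by
    rw [lp.infty_coeFn_mul, Pi.mul_apply, deltaTwo_apply]
    split_ifs <;> simp

theorem one_sub_deltaTwo_apply (i : {ℓ : ℕ // 1 ≤ ℓ}) :
    (1 - deltaTwo) i = if (i : ℕ) = 2 then 0 else 1 := by
  rw [lp.coeFn_sub, Pi.sub_apply, lp.infty_coeFn_one, Pi.one_apply, deltaTwo_apply]
  split_ifs <;> simp

section MatrixOfT

variable {Omega : ℝ} {T : ℓ²({ℓ : ℕ // 1 ≤ ℓ}, ℂ) →L[ℂ] ℓ²({ℓ : ℕ // 1 ≤ ℓ}, ℂ)}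
  (hT : ∀ ℓ : ℕ, 1 ≤ ℓ →
    T (e ℓ) = ((1 : ℂ) - 6 / (lamCoef ℓ : ℂ)) •
      ((aCoef ℓ : ℂ) • e (ℓ - 1) + (aCoef (ℓ + 1) : ℂ) • e (ℓ + 1))
        - ((Omega / lamCoef ℓ : ℝ) : ℂ) • e ℓ)
include hT

theorem T_e_apply {k : ℕ} (hk : 1 ≤ k) (i : {ℓ : ℕ // 1 ≤ ℓ}) : T (e k) i = tMatrix Omega i k := by
  have hi := i.2
  have hsub : (i : ℕ) = k - 1 ↔ (i : ℕ) + 1 = k := by omega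
  simp only [hT k hk, lp.coeFn_sub, lp.coeFn_add, lp.coeFn_smul, Pi.sub_apply, Pi.add_apply,
    Pi.smul_apply, smul_eq_mul, e_apply, hsub, tMatrix]
  split_ifs <;> push_cast <;> ring

theorem one_sub_deltaTwo_mul_mul_deltaTwo :
    (1 - lp.diagonal deltaTwo) * T * lp.diagonal deltaTwo = 0 := by
  rw [← map_one lp.diagonal, ← map_sub]
  refine lp.ext_single_one_apply fun i j => ?_
  rw [lp.diagonal_mul_mul_diagonal_single_one_apply, ← e_coe, T_e_apply hT j.2]
  simp only [one_sub_deltaTwo_apply, deltaTwo_apply]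
  by_cases hi : (i : ℕ) = 2 <;> by_cases hj : (j : ℕ) = 2 <;> simp [hi, hj, tMatrix_two]

theorem pinch_deltaTwo_single_one_apply (i j : {ℓ : ℕ // 1 ≤ ℓ}) :
    pinch (lp.diagonal deltaTwo) T (lp.single 2 j 1) i
      = if ((i : ℕ) = 2 ↔ (j : ℕ) = 2) then (tMatrix Omega i j : ℂ) else 0 := by
  rw [pinch, ← map_one lp.diagonal, ← map_sub, add_apply, lp.coeFn_add, Pi.add_apply,
    lp.diagonal_mul_mul_diagonal_single_one_apply, lp.diagonal_mul_mul_diagonal_single_one_apply,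
    ← e_coe, T_e_apply hT j.2]
  simp only [one_sub_deltaTwo_apply, deltaTwo_apply]
  by_cases hi : (i : ℕ) = 2 <;> by_cases hj : (j : ℕ) = 2 <;> simp [hi, hj]

theorem isSelfAdjoint_sqrtWeight_mul_pinch_mul :
    IsSelfAdjoint (lp.diagonal ↑sqrtWeight * pinch (lp.diagonal deltaTwo) T
      * lp.diagonal ↑sqrtWeight⁻¹) := by
  refine lp.isSelfAdjoint_of_single_one_apply fun i j => ?_
  rw [lp.diagonal_mul_mul_diagonal_single_one_apply, lp.diagonal_mul_mul_diagonal_single_one_apply,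
    pinch_deltaTwo_single_one_apply hT, pinch_deltaTwo_single_one_apply hT]
  by_cases hij : (i : ℕ) = 2 ↔ (j : ℕ) = 2
  · simp only [if_pos hij, if_pos hij.symm, sqrtWeight_apply, sqrtWeight_inv_apply,
      ← Complex.ofReal_mul, Complex.conj_ofReal]
    exact congrArg _ (Real.sqrt_mul_inv_sqrt_mul_eq_of_mul_eq (weight_pos i) (weight_pos j)
      (weight_mul_tMatrix_comm Omega hij))
  · rw [if_neg hij, if_neg (mt Iff.symm hij)]
    simp

end MatrixOfT

theorem spectrum_real_P2_V1_Omega_pos_general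
    (Omega : ℝ)
    (T : lp (fun _ : {ℓ : ℕ // 1 ≤ ℓ} => ℂ) 2 →L[ℂ] lp (fun _ : {ℓ : ℕ // 1 ≤ ℓ} => ℂ) 2)
    (hT : ∀ ℓ : ℕ, 1 ≤ ℓ →
      T (e ℓ) = ((1 : ℂ) - 6 / (lamCoef ℓ : ℂ)) •
        ((aCoef ℓ : ℂ) • e (ℓ - 1) + (aCoef (ℓ + 1) : ℂ) • e (ℓ + 1)) - ((Omega / lamCoef ℓ : ℝ) : ℂ) • e ℓ) :
    ∀ lam ∈ spectrum ℂ T, lam.im = 0 := by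
  intro lam hlam
  have hpinch := spectrum.subset_pinch (isIdempotentElem_deltaTwo.map lp.diagonal)
    (one_sub_deltaTwo_mul_mul_deltaTwo hT) hlam
  rw [← spectrum.units_conjugate
    (u := Units.map (lp.diagonal (𝕜 := ℂ)).toMonoidHom sqrtWeight)] at hpinch
  exact (isSelfAdjoint_sqrtWeight_mul_pinch_mul hT).im_eq_zero_of_mem_spectrum hpinch

/-- **Proposition 5.1.2.** For `Ω > 0`, the matrix operator
`T e_ℓ = (1 − 6/λ_ℓ)(a_ℓ e_{ℓ−1} + a_{ℓ+1} e_{ℓ+1}) − (Ω/λ_ℓ) e_ℓ` (the representation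
of `M₁ζ = A(x₃)ζ + B(x₃)Δ⁻¹ζ`, `A(x₃) = x₃`, `B(x₃) = Ω + 6x₃`, on `V₁` for the zonal
flow with stream function `cP₂(x₃)`) has only real spectrum. -/
theorem spectrum_real_P2_V1_Omega_pos
    (Omega : ℝ) (hOmega : 0 < Omega)
    (T : lp (fun _ : {ℓ : ℕ // 1 ≤ ℓ} => ℂ) 2 →L[ℂ] lp (fun _ : {ℓ : ℕ // 1 ≤ ℓ} => ℂ) 2)
    (hT : ∀ ℓ : ℕ, 1 ≤ ℓ →
      T (e ℓ) = ((1 : ℂ) - 6 / (lamCoef ℓ : ℂ)) •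
        ((aCoef ℓ : ℂ) • e (ℓ - 1) + (aCoef (ℓ + 1) : ℂ) • e (ℓ + 1)) - ((Omega / lamCoef ℓ : ℝ) : ℂ) • e ℓ) :
    ∀ lam ∈ spectrum ℂ T, lam.im = 0 :=
  spectrum_real_P2_V1_Omega_pos_general Omega T hT
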